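/- arXiv:1807.06444 — 9 statements merged into one kernel-verified Lean document; each statement's English description precedes it below -/
import Mathlib

section
/- Every symmetric ring is weak symmetric: if B is a ring such that abc = 0 implies acb = 0 for all a, b, c, then whenever a*b*c is nilpotent, a*c*b is also nilpotent. -/
private lemma sym_swap {B : Type*} [Ring B]
    (hsym : ∀ a b c : B, a * b * c = 0 → a * c * b = 0)
    (x u v y : B) (h : x * u * v * y = 0) : x * v * u * y = 0 := by
  have h1 : x * u * (v * y) = 0 := by rw [← mul_assoc]; exact h
  have h2 : x * (v * y) * u = 0 := hsym x u (v * y) h1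
  have h3 : (x * v) * y * u = 0 := by rw [mul_assoc x v y]; exact h2
  have h4 : (x * v) * u * y = 0 := hsym (x * v) y u h3
  exact h4

private lemma sym_pow {B : Type*} [Ring B]
    (hsym : ∀ a b c : B, a * b * c = 0 → a * c * b = 0)
    (a b c : B) : ∀ n : ℕ, ∀ x y : B,
    x * (a * b * c) ^ n * y = 0 → x * (a * c * b) ^ n * y = 0 := by
  intro n
  induction n with
  | zero => intro x y h; simpa using h
  | succ n ih =>
    intro x y h
    have h1 : (x * (a * b * c)) * (a * b * c) ^ n * y = 0 := by
      rw [pow_succ'] at h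
      rw [mul_assoc x]
      rw [mul_assoc] at h ⊢
      exact h
    have h2 : (x * (a * b * c)) * (a * c * b) ^ n * y = 0 := ih (x * (a * b * c)) y h1
    have h3 : (x * a) * b * c * ((a * c * b) ^ n * y) = 0 := by
      simp only [mul_assoc] at h2 ⊢
      exact h2
    have h4 : (x * a) * c * b * ((a * c * b) ^ n * y) = 0 :=
      sym_swap hsym (x * a) b c ((a * c * b) ^ n * y) h3
    rw [pow_succ']
    calc x * ((a * c * b) * (a * c * b) ^ n) * y
        = (x * a) * c * b * ((a * c * b) ^ n * y) := by
          simp only [mul_assoc]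
      _ = 0 := h4

theorem symmetric_is_weak_symmetric (B : Type*) [Ring B]
    (hsym : ∀ a b c : B, a * b * c = 0 → a * c * b = 0) :
    ∀ a b c : B, IsNilpotent (a * b * c) → IsNilpotent (a * c * b) := by
  intro a b c ⟨n, hn⟩
  refine ⟨n, ?_⟩
  have := sym_pow hsym a b c n 1 1 (by simpa using hn)
  simpa using this
end

section
/- If B is a semicommutative ring, then the set of nilpotent elements of B is a (two-sided) ideal of B. -/
section aux

variable {B : Type*} [Ring B]

private lemma aux_mul (hsc : ∀ a b r : B, a * b = 0 → a * r * b = 0) :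
    ∀ (n : ℕ) (a x u : B), u * a ^ n = 0 → u * (a * x) ^ n = 0 := by
  intro n
  induction n with
  | zero => intro a x u h; simpa using h
  | succ n ih =>
      intro a x u h
      have h' : (u * a) * a ^ n = 0 := by
        rw [mul_assoc, ← pow_succ']; exact h
      have h1 : (u * a) * x * a ^ n = 0 := hsc (u * a) (a ^ n) x h'
      have h2 := ih a x (u * a * x) h1
      rw [pow_succ']
      simpa [mul_assoc] using h2

private lemma aux_word (hsc : ∀ a b r : B, a * b = 0 → a * r * b = 0) :
    ∀ (l : List Bool) (a b u : B),
    u * a ^ (l.count true) = 0 →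
    u * (l.map fun t => if t then a else b).prod = 0 := by
  intro l
  induction l with
  | nil => intro a b u h; simpa using h
  | cons t l ih =>
      intro a b u h
      cases t with
      | true =>
          simp only [List.count_cons, if_pos rfl] at h
          norm_num at h
          simp only [List.map_cons, List.prod_cons, if_true]
          have h' : (u * a) * a ^ (l.count true) = 0 := by
            rw [mul_assoc, ← pow_succ']; exact h
          have := ih a b (u * a) h'
          simpa [mul_assoc] using this
      | false =>
          simp only [List.count_cons] at h
          norm_num at h
          simp only [List.map_cons, List.prod_cons, if_false]
          have := ih a b (u * b) (hsc u (a ^ (l.count true)) b h)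
          simpa [mul_assoc] using this

private lemma aux_count (l : List Bool) : l.count true + l.count false = l.length := by
  induction l with
  | nil => simp
  | cons t l ih => cases t <;> simp [List.count_cons] <;> omega

private lemma aux_pow (hsc : ∀ a b r : B, a * b = 0 → a * r * b = 0) :
    ∀ (N : ℕ) (x y u : B),
    (∀ l : List Bool, l.length = N → u * (l.map fun t => if t then x else y).prod = 0) →
    u * (x + y) ^ N = 0 := by
  intro N
  induction N with
  | zero =>
      intro x y u h
      simpa using h [] rfl
  | succ N ih =>
      intro x y u h
      rw [pow_succ', ← mul_assoc, mul_add, add_mul]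
      have h1 : (u * x) * (x + y) ^ N = 0 := by
        refine ih x y (u * x) fun l hl => ?_
        have := h (true :: l) (by simp [hl])
        simpa [mul_assoc] using this
      have h2 : (u * y) * (x + y) ^ N = 0 := by
        refine ih x y (u * y) fun l hl => ?_
        have := h (false :: l) (by simp [hl])
        simpa [mul_assoc] using this
      rw [h1, h2, add_zero]

private lemma aux_swap_map (l : List Bool) (a b : B) :
    (l.map Bool.not).map (fun t => if t then b else a)
      = l.map fun t => if t then a else b := by
  induction l with
  | nil => rfl
  | cons t l ih =>
      simp only [List.map_cons]
      rw [ih]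
      cases t <;> rfl

private lemma aux_count_not (l : List Bool) :
    (l.map Bool.not).count true = l.count false := by
  induction l with
  | nil => rfl
  | cons t l ih => cases t <;> simp [List.count_cons, ih]

private lemma aux_shift (n : ℕ) (x y : B) : (x * y) ^ (n + 1) = x * (y * x) ^ n * y := by
  induction n with
  | zero => simp [mul_assoc]
  | succ n ih =>
      rw [pow_succ, ih, pow_succ]
      simp [mul_assoc]

end aux

theorem nil_ideal_of_semicommutative (B : Type*) [Ring B]
    (hsc : ∀ a b r : B, a * b = 0 → a * r * b = 0) :
    ∃ I : TwoSidedIdeal B, ∀ x : B, x ∈ I ↔ IsNilpotent x := by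
  have mul_right : ∀ {x y : B}, IsNilpotent x → IsNilpotent (x * y) := by
    rintro x y ⟨n, hn⟩
    refine ⟨n, ?_⟩
    have := aux_mul hsc n x y 1 (by simpa using hn)
    simpa using this
  have mul_left : ∀ {x y : B}, IsNilpotent y → IsNilpotent (x * y) := by
    rintro x y ⟨n, hn⟩
    refine ⟨n + 1, ?_⟩
    have hyx : (y * x) ^ n = 0 := by
      have := aux_mul hsc n y x 1 (by simpa using hn)
      simpa using this
    rw [aux_shift, hyx, mul_zero, zero_mul]
  refine ⟨TwoSidedIdeal.mk' {x : B | IsNilpotent x} ⟨1, by simp⟩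
    ?_ (fun h => h.neg) (fun h => mul_left h) (fun h => mul_right h),
    fun x => TwoSidedIdeal.mem_mk' _ _ _ _ _ _ x⟩
  rintro a b ⟨n, hn⟩ ⟨m, hm⟩
  refine ⟨n + m, ?_⟩
  have key : (1 : B) * (a + b) ^ (n + m) = 0 := by
    refine aux_pow hsc (n + m) a b 1 fun l hl => ?_
    have hcnt := aux_count l
    rw [hl] at hcnt
    rcases le_or_gt n (l.count true) with hc | hc
    · refine aux_word hsc l a b 1 ?_
      obtain ⟨k, hk⟩ := Nat.exists_eq_add_of_le hc
      rw [hk, pow_add, hn, zero_mul, mul_zero]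
    · have hcb : m ≤ l.count false := by omega
      rw [← aux_swap_map l a b]
      refine aux_word hsc (l.map Bool.not) b a 1 ?_
      rw [aux_count_not]
      obtain ⟨k, hk⟩ := Nat.exists_eq_add_of_le hcb
      rw [hk, pow_add, hm, zero_mul, mul_zero]
  simpa using key
end

section
/- Let B be a Σ-rigid ring (with respect to a family Σ of endomorphisms). If a, b in B satisfy ab = 0, then a·σ^α(b) = 0 and σ^α(a)·b = 0 for every α in ℕ^n. -/
/-- The composition `σ₁^{α₁} ∘ ⋯ ∘ σₙ^{αₙ}` of a family of ring endomorphisms. -/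
def sigmaPow {B : Type*} [Ring B] {n : ℕ} (σ : Fin n → B →+* B) (α : Fin n → ℕ) : B → B :=
  fun b => (List.finRange n).foldr (fun i x => (⇑(σ i))^[α i] x) b

lemma sigmaPow_mul {B : Type*} [Ring B] {n : ℕ} (σ : Fin n → B →+* B) (α : Fin n → ℕ)
    (x y : B) : sigmaPow σ α (x * y) = sigmaPow σ α x * sigmaPow σ α y := by
  unfold sigmaPow
  induction List.finRange n with
  | nil => simp
  | cons i l ih => simp [ih, iterate_map_mul]

lemma sigmaPow_zero {B : Type*} [Ring B] {n : ℕ} (σ : Fin n → B →+* B) (α : Fin n → ℕ) :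
    sigmaPow σ α 0 = 0 := by
  unfold sigmaPow
  induction List.finRange n with
  | nil => simp
  | cons i l ih => simp [ih, iterate_map_zero]

lemma sigmaPow_zero_exp {B : Type*} [Ring B] {n : ℕ} (σ : Fin n → B →+* B) (r : B) :
    sigmaPow σ (fun _ => 0) r = r := by
  unfold sigmaPow
  induction List.finRange n with
  | nil => simp
  | cons i l ih => simp [ih]

theorem sigma_rigid_mul_zero (B : Type*) [Ring B] (n : ℕ) (σ : Fin n → B →+* B)
    (hrigid : ∀ (r : B) (α : Fin n → ℕ), r * sigmaPow σ α r = 0 → r = 0)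
    (a b : B) (hab : a * b = 0) :
    ∀ α : Fin n → ℕ, a * sigmaPow σ α b = 0 ∧ sigmaPow σ α a * b = 0 := by
  have hred : ∀ r : B, r * r = 0 → r = 0 := fun r hr =>
    hrigid r (fun _ => 0) (by rwa [sigmaPow_zero_exp])
  have hflip : ∀ x y : B, x * y = 0 → y * x = 0 := by
    intro x y hxy
    apply hred
    calc y * x * (y * x) = y * (x * y) * x := by noncomm_ring
      _ = 0 := by rw [hxy]; noncomm_ring
  -- key lemma: x*y = 0 and y*x = 0 imply x * σ^α(y) = 0
  have key : ∀ (x y : B) (α : Fin n → ℕ), x * y = 0 → x * sigmaPow σ α y = 0 := by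
    intro x y α hxy
    have hyx := hflip x y hxy
    apply hrigid _ α
    calc x * sigmaPow σ α y * sigmaPow σ α (x * sigmaPow σ α y)
        = x * sigmaPow σ α y * (sigmaPow σ α x * sigmaPow σ α (sigmaPow σ α y)) := by
          rw [sigmaPow_mul]
      _ = x * (sigmaPow σ α y * sigmaPow σ α x) * sigmaPow σ α (sigmaPow σ α y) := by noncomm_ring
      _ = x * sigmaPow σ α (y * x) * sigmaPow σ α (sigmaPow σ α y) := by rw [sigmaPow_mul]
      _ = 0 := by rw [hyx, sigmaPow_zero]; noncomm_ring
  intro α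
  refine ⟨key a b α hab, hflip b (sigmaPow σ α a) (key b a α (hflip a b hab))⟩
end

section
/- Let B be a reversible ring with an endomorphism σ and a σ-derivation δ such that B is (σ,δ)-compatible. If ab is nilpotent for a, b ∈ B, then a·σ(δ(b)) is nilpotent and a·δ(σ(b)) is nilpotent. -/
lemma nilpotent_aux (B : Type*) [Ring B]
    (hrev : ∀ x y : B, x * y = 0 → y * x = 0)
    (f : B → B) (hf : ∀ x y : B, x * y = 0 → x * f y = 0)
    (a b : B) (h : IsNilpotent (a * b)) : IsNilpotent (a * f b) := by
  obtain ⟨n, hn⟩ := h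
  refine ⟨n, ?_⟩
  set c := a * f b with hc
  set x := a * b with hx
  have key : ∀ k, k ≤ n → c ^ k * x ^ (n - k) = 0 := by
    intro k
    induction k with
    | zero => intro _; simpa using hn
    | succ k ih =>
      intro hk
      have h1 := ih (Nat.le_of_succ_le hk)
      have hnk : n - k = (n - (k + 1)) + 1 := by omega
      rw [hnk, pow_succ, ← mul_assoc] at h1
      -- h1 : c ^ k * x ^ (n - (k+1)) * x = 0
      have h2 : (c ^ k * x ^ (n - (k + 1)) * a) * b = 0 := by
        rw [mul_assoc]; rw [← hx]; exact h1
      have h3 := hf _ _ h2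
      rw [mul_assoc, ← hc] at h3
      -- h3 : c ^ k * x ^ (n - (k+1)) * c = 0
      have h4 := hrev _ _ h3
      rw [← mul_assoc, ← pow_succ'] at h4
      exact h4
  have := key n le_rfl
  simpa using this

theorem nilpotent_sigma_delta (B : Type*) [Ring B]
    (hrev : ∀ x y : B, x * y = 0 → y * x = 0)
    (σ : B →+* B) (δ : B → B)
    (hadd : ∀ x y : B, δ (x + y) = δ x + δ y)
    (hleib : ∀ x y : B, δ (x * y) = σ x * δ y + δ x * y)
    (hσ : ∀ a b : B, a * b = 0 ↔ a * σ b = 0)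
    (hδ : ∀ a b : B, a * b = 0 → a * δ b = 0)
    (a b : B) (h : IsNilpotent (a * b)) :
    IsNilpotent (a * σ (δ b)) ∧ IsNilpotent (a * δ (σ b)) := by
  have hfσ : ∀ x y : B, x * y = 0 → x * σ y = 0 := fun x y hxy => (hσ x y).mp hxy
  have haδ : IsNilpotent (a * δ b) := nilpotent_aux B hrev δ hδ a b h
  have haσ : IsNilpotent (a * σ b) := nilpotent_aux B hrev σ hfσ a b h
  exact ⟨nilpotent_aux B hrev σ hfσ a (δ b) haδ,
         nilpotent_aux B hrev δ hδ a (σ b) haσ⟩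
end

section
/- Let B be a ring with an endomorphism σ such that B is σ-compatible (for all a,b ∈ B: ab = 0 iff a·σ(b) = 0). If a·σ(b) is nilpotent, then ab is nilpotent. -/
theorem nilpotent_of_nilpotent_sigma (B : Type*) [Ring B] (σ : B →+* B)
    (hσ : ∀ a b : B, a * b = 0 ↔ a * σ b = 0)
    (a b : B) (h : IsNilpotent (a * σ b)) :
    IsNilpotent (a * b) := by
  obtain ⟨n, hn⟩ := h
  refine ⟨n, ?_⟩
  have key : ∀ k m : ℕ, (a * σ b) ^ k * (a * b) ^ m = 0 → (a * b) ^ (k + m) = 0 := by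
    intro k
    induction k with
    | zero => intro m hm; simpa using hm
    | succ k ih =>
      intro m hm
      have h1 : ((a * σ b) ^ k * a * σ b) * (a * b) ^ m = 0 := by
        rw [pow_succ] at hm
        simp only [mul_assoc] at hm ⊢
        exact hm
      have h2 : ((a * σ b) ^ k * a * σ b) * σ ((a * b) ^ m) = 0 :=
        (hσ _ _).mp h1
      have h3 : ((a * σ b) ^ k * a) * σ (b * (a * b) ^ m) = 0 := by
        rw [map_mul, ← mul_assoc]
        exact h2
      have h4 : ((a * σ b) ^ k * a) * (b * (a * b) ^ m) = 0 :=
        (hσ _ _).mpr h3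
      have h5 : (a * σ b) ^ k * (a * b) ^ (m + 1) = 0 := by
        rw [pow_succ']
        simp only [mul_assoc] at h4 ⊢
        exact h4
      have := ih (m + 1) h5
      rwa [show k + (m + 1) = k + 1 + m by omega] at this
  have := key n 0 (by simpa using hn)
  simpa using this
end

section
/- Let B be a σ-rigid ring (σ an endomorphism with a·σ(a) = 0 ⟹ a = 0). Then B is (σ,δ)-compatible for any σ-derivation δ: for all a, b ∈ B, ab = 0 iff a·σ(b) = 0, and ab = 0 implies a·δ(b) = 0. -/
/-!
A σ-rigid ring is reduced, and in a reduced ring `a * b = 0` forces `b * a = 0` and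
`a * x * b = 0` for every `x`. Rigidity then lets `σ` be inserted or removed in a vanishing
product: `a * σ b` is killed by rigidity because `σ (b * a) = 0`, and conversely `b * a` is
killed because `(b * a) * σ (b * a) = b * (a * σ b) * σ a`. For a σ-derivation `δ` and
`a * b = 0`, applying `δ` gives `σ a * δ b + δ a * b = 0`; right multiplication by `δ a * b`
and `σ a * b = 0` show `δ a * b` squares to zero, hence `σ a * δ b = 0`, and moving factors
around turns this into `a * δ b = 0`.
-/

section Reduced

variable {M₀ : Type*} [MonoidWithZero M₀] [IsReduced M₀] {a b : M₀}

theorem mul_eq_zero_symm_of_isReduced (h : a * b = 0) : b * a = 0 :=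
  sq_eq_zero_iff.mp <| by rw [sq, mul_assoc, ← mul_assoc a, h, zero_mul, mul_zero]

theorem mul_mul_eq_zero_of_isReduced (h : a * b = 0) (x : M₀) : a * x * b = 0 :=
  sq_eq_zero_iff.mp <| by
    rw [sq, mul_assoc, ← mul_assoc b, ← mul_assoc b, mul_eq_zero_symm_of_isReduced h]
    simp only [zero_mul, mul_zero]

end Reduced

def IsRigid {B : Type*} [Semiring B] (σ : B →+* B) : Prop :=
  ∀ a : B, a * σ a = 0 → a = 0

namespace IsRigid

variable {B : Type*} [Semiring B] {σ : B →+* B} {a b : B}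

theorem isReduced (h : IsRigid σ) : IsReduced B :=
  (isReduced_iff_pow_one_lt 2 one_lt_two).mpr fun a ha ↦ h a <| h _ <| by
    rw [map_mul, ← mul_assoc, mul_assoc a, ← map_mul, ← sq, ha, map_zero, mul_zero, zero_mul]

theorem mul_map_eq_zero (h : IsRigid σ) (hab : a * b = 0) : a * σ b = 0 :=
  have := h.isReduced
  h _ <| by
    rw [map_mul, ← mul_assoc, mul_assoc a, ← map_mul, mul_eq_zero_symm_of_isReduced hab,
      map_zero, mul_zero, zero_mul]

theorem mul_eq_zero_of_mul_map (h : IsRigid σ) (hab : a * σ b = 0) : a * b = 0 :=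
  have := h.isReduced
  mul_eq_zero_symm_of_isReduced <| h _ <| by
    rw [map_mul, mul_assoc b, ← mul_assoc a, hab, zero_mul, mul_zero]

theorem mul_map_eq_zero_iff (h : IsRigid σ) : a * σ b = 0 ↔ a * b = 0 :=
  ⟨h.mul_eq_zero_of_mul_map, h.mul_map_eq_zero⟩

theorem mul_apply_eq_zero_of_mul_eq_zero (h : IsRigid σ) (δ : B →+ B)
    (hδ : ∀ x y, δ (x * y) = σ x * δ y + δ x * y) (hab : a * b = 0) : a * δ b = 0 := by
  have := h.isReduced
  have hsum : σ a * δ b + δ a * b = 0 := by rw [← hδ, hab, map_zero]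
  have hσab : σ a * b = 0 := h.mul_eq_zero_of_mul_map <| by rw [← map_mul, hab, map_zero]
  have hδab : δ a * b = 0 := sq_eq_zero_iff.mp <| calc
    (δ a * b) ^ 2 = σ a * (δ b * δ a) * b + δ a * b * (δ a * b) := by
      rw [mul_mul_eq_zero_of_isReduced hσab, zero_add, sq]
    _ = (σ a * δ b + δ a * b) * (δ a * b) := by simp only [add_mul, mul_assoc]
    _ = 0 := by rw [hsum, zero_mul]
  rw [hδab, add_zero] at hsum
  exact mul_eq_zero_symm_of_isReduced <| h.mul_eq_zero_of_mul_map <|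
    mul_eq_zero_symm_of_isReduced hsum

end IsRigid

theorem rigid_is_compatible (B : Type*) [Ring B] (σ : B →+* B)
    (hrigid : ∀ a : B, a * σ a = 0 → a = 0) :
    ∀ δ : B → B, (∀ x y : B, δ (x + y) = δ x + δ y) →
      (∀ x y : B, δ (x * y) = σ x * δ y + δ x * y) →
      ∀ a b : B, (a * b = 0 ↔ a * σ b = 0) ∧ (a * b = 0 → a * δ b = 0) := by
  have hσ : IsRigid σ := hrigid
  intro δ hadd hmul a b
  exact ⟨hσ.mul_map_eq_zero_iff.symm,
    hσ.mul_apply_eq_zero_of_mul_eq_zero (AddMonoidHom.mk' δ hadd) hmul⟩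
end

section
/- Let B be a reversible and σ-compatible ring, and let f = Σ a_i x^i, g = Σ b_j x^j be elements of the skew polynomial ring B[x;σ] (with no derivation: x·r = σ(r)·x). If every product a_i·b_j is nilpotent in B, then every coefficient of f·g is nilpotent in B. -/
namespace SkewNil

variable {B : Type*} [Ring B]

/-- Reversible rings are semicommutative. -/
lemma semicomm (hrev : ∀ x y : B, x * y = 0 → y * x = 0)
    {x y : B} (h : x * y = 0) (r : B) : x * r * y = 0 := by
  have h1 : y * x = 0 := hrev _ _ h
  have h2 : y * (x * r) = 0 := by rw [← mul_assoc, h1, zero_mul]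
  exact hrev _ _ h2

/-- Word in two letters. -/
def wrd (a b : B) (l : List Bool) : B := (l.map (fun t => if t then a else b)).prod

lemma wrd_nil (a b : B) : wrd a b [] = 1 := rfl

lemma wrd_cons (a b : B) (t : Bool) (l : List Bool) :
    wrd a b (t :: l) = (if t then a else b) * wrd a b l := by
  simp [wrd]

lemma wrd_zero (hrev : ∀ x y : B, x * y = 0 → y * x = 0) (a b : B) :
    ∀ (l : List Bool) (x : B) (k : ℕ), x * a ^ k = 0 → k ≤ l.count true →
      x * wrd a b l = 0 := by
  intro l
  induction l with
  | nil =>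
    intro x k hx hk
    simp only [List.count_nil, Nat.le_zero] at hk
    subst hk
    simpa [wrd] using hx
  | cons t l ih =>
    intro x k hx hk
    rcases Nat.eq_zero_or_pos k with rfl | hkpos
    · have hx0 : x = 0 := by simpa using hx
      simp [hx0]
    · obtain ⟨k', rfl⟩ : ∃ k', k = k' + 1 := ⟨k - 1, by omega⟩
      cases t with
      | true =>
        have hk' : k' ≤ l.count true := by
          simp [List.count_cons] at hk; omega
        have hx' : (x * a) * a ^ k' = 0 := by
          rw [mul_assoc, ← pow_succ']
          exact hx
        have := ih (x * a) k' hx' hk'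
        rw [wrd_cons]
        simpa [mul_assoc] using this
      | false =>
        have hk' : k' + 1 ≤ l.count true := by simpa [List.count_cons] using hk
        have hx' : (x * b) * a ^ (k' + 1) = 0 := semicomm hrev hx b
        have := ih (x * b) (k' + 1) hx' hk'
        rw [wrd_cons]
        simpa [mul_assoc] using this

lemma wrd_swap (a b : B) (l : List Bool) : wrd a b l = wrd b a (l.map (fun t => !t)) := by
  induction l with
  | nil => rfl
  | cons t l ih => cases t <;> simp [wrd_cons, ih]





lemma count_not (l : List Bool) : (l.map (fun t => !t)).count true = l.count false := by
  induction l with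
  | nil => rfl
  | cons t l ih => cases t <;> simp [List.count_cons, ih]

lemma count_len (l : List Bool) : l.count true + l.count false = l.length := by
  induction l with
  | nil => rfl
  | cons t l ih => cases t <;> simp [List.count_cons] <;> omega

lemma pow_add_expand (a b : B) (wrd : List Bool → B)
    (h1 : wrd [] = 1)
    (hc : ∀ t l, wrd (t :: l) = (if t then a else b) * wrd l) :
    ∀ N, ∃ s : Multiset (List Bool),
      (∀ l ∈ s, l.length = N) ∧ (a + b) ^ N = (s.map wrd).sum := by
  intro N
  induction N with
  | zero => exact ⟨{[]}, by simp, by simp [h1]⟩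
  | succ N ih =>
    obtain ⟨s, hlen, hsum⟩ := ih
    refine ⟨s.map (true :: ·) + s.map (false :: ·), ?_, ?_⟩
    · intro l hl
      simp only [Multiset.mem_add, Multiset.mem_map] at hl
      rcases hl with ⟨l', hl', rfl⟩ | ⟨l', hl', rfl⟩ <;> simp [hlen l' hl']
    · rw [pow_succ', add_mul, hsum]
      simp only [Multiset.map_add, Multiset.map_map, Multiset.sum_add,
        Function.comp_def, hc]
      simp [Multiset.sum_map_mul_left]



lemma isNilpotent_add_of_rev (hrev : ∀ x y : B, x * y = 0 → y * x = 0)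
    {a b : B} (ha : IsNilpotent a) (hb : IsNilpotent b) : IsNilpotent (a + b) := by
  obtain ⟨n, han⟩ := ha
  obtain ⟨m, hbm⟩ := hb
  have han' : a ^ (n + 1) = 0 := by rw [pow_succ, han, zero_mul]
  have hbm' : b ^ (m + 1) = 0 := by rw [pow_succ, hbm, zero_mul]
  obtain ⟨s, hlen, hsum⟩ := pow_add_expand a b (wrd a b) (wrd_nil a b) (wrd_cons a b)
    (n + m + 1)
  refine ⟨n + m + 1, ?_⟩
  rw [hsum]
  apply Multiset.sum_eq_zero
  intro x hx
  obtain ⟨l, hl, rfl⟩ := Multiset.mem_map.mp hx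
  have hcount := count_len l
  rw [hlen l hl] at hcount
  by_cases hca : n + 1 ≤ l.count true
  · have := wrd_zero hrev a b l 1 (n + 1) (by simpa using han') hca
    simpa using this
  · have hcb : m + 1 ≤ (l.map (fun t => !t)).count true := by
      rw [count_not]; omega
    rw [wrd_swap]
    have := wrd_zero hrev b a (l.map (fun t => !t)) 1 (m + 1) (by simpa using hbm') hcb
    simpa using this

lemma rep (σ : B →+* B) (hσ : ∀ a b : B, a * b = 0 ↔ a * σ b = 0)
    (u b v : B) (h : u * (b * v) = 0) : u * (σ b * v) = 0 := by
  have h1 : u * σ (b * v) = 0 := (hσ _ _).mp h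
  rw [map_mul] at h1
  have h2 : u * σ b * σ v = 0 := by rwa [mul_assoc]
  have h3 : u * σ b * v = 0 := (hσ _ _).mpr h2
  rwa [mul_assoc] at h3

lemma nilstep (σ : B →+* B) (hσ : ∀ a b : B, a * b = 0 ↔ a * σ b = 0)
    {a b : B} {p : ℕ} (h : (a * b) ^ p = 0) : (a * σ b) ^ p = 0 := by
  have key : ∀ m, m ≤ p → (a * σ b) ^ m * (a * b) ^ (p - m) = 0 := by
    intro m
    induction m with
    | zero => intro _; simpa using h
    | succ m ih =>
      intro hm
      have hm' := ih (Nat.le_of_succ_le hm)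
      have hd : p - m = (p - (m + 1)) + 1 := by omega
      rw [hd, pow_succ'] at hm'
      have h2 : ((a * σ b) ^ m * a) * (b * (a * b) ^ (p - (m + 1))) = 0 := by
        simp only [mul_assoc] at hm' ⊢
        exact hm'
      have h3 := rep σ hσ _ _ _ h2
      rw [pow_succ]
      simp only [mul_assoc] at h3 ⊢
      exact h3
  simpa using key p le_rfl

lemma nil_iter (σ : B →+* B) (hσ : ∀ a b : B, a * b = 0 ↔ a * σ b = 0)
    {a b : B} {p : ℕ} (h : (a * b) ^ p = 0) : ∀ i, (a * (⇑σ)^[i] b) ^ p = 0 := by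
  intro i
  induction i with
  | zero => simpa using h
  | succ i ih =>
    rw [Function.iterate_succ_apply']
    exact nilstep σ hσ ih

end SkewNil

/-- In the skew polynomial ring `B[x;σ]` (with `x·r = σ(r)·x`), the `k`-th coefficient of
the product of `f = Σ aᵢ xⁱ` and `g = Σ bⱼ xʲ` is `Σ_{i+j=k} aᵢ σⁱ(bⱼ)`. -/
theorem skew_poly_coeffs_nilpotent (B : Type*) [Ring B] (σ : B →+* B)
    (hinj : Function.Injective σ)
    (hrev : ∀ x y : B, x * y = 0 → y * x = 0)
    (hσ : ∀ a b : B, a * b = 0 ↔ a * σ b = 0)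
    (f g : ℕ →₀ B)
    (h : ∀ i j, IsNilpotent (f i * g j)) :
    ∀ k : ℕ, IsNilpotent (∑ i ∈ Finset.range (k + 1), f i * (⇑σ)^[i] (g (k - i))) := by
  intro k
  refine Finset.sum_induction _ IsNilpotent
    (fun a b ha hb => SkewNil.isNilpotent_add_of_rev hrev ha hb)
    IsNilpotent.zero ?_
  intro i _
  obtain ⟨p, hp⟩ := h i (k - i)
  exact ⟨p, SkewNil.nil_iter σ hσ hp i⟩
end

section
/- Let B be a reversible ring with endomorphism σ and σ-derivation δ, and suppose B is (σ,δ)-compatible. If ab is nilpotent for a, b in B, then a·σ^m(b) is nilpotent for every m ≥ 0. -/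
theorem nilpotent_sigma_pow (B : Type*) [Ring B]
    (hrev : ∀ x y : B, x * y = 0 → y * x = 0)
    (σ : B →+* B) (δ : B → B)
    (hadd : ∀ x y : B, δ (x + y) = δ x + δ y)
    (hleib : ∀ x y : B, δ (x * y) = σ x * δ y + δ x * y)
    (hσ : ∀ a b : B, a * b = 0 ↔ a * σ b = 0)
    (hδ : ∀ a b : B, a * b = 0 → a * δ b = 0)
    (a b : B) (h : IsNilpotent (a * b)) :
    ∀ m : ℕ, IsNilpotent (a * (⇑σ)^[m] b) := by
  have key : ∀ c : B, IsNilpotent (a * c) → IsNilpotent (a * σ c) := by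
    rintro c ⟨k, hk⟩
    have main : ∀ n : ℕ, ∀ x : B, x * (a * c) ^ n = 0 → x * (a * σ c) ^ n = 0 := by
      intro n
      induction n with
      | zero => simp
      | succ n ih =>
        intro x hx
        rw [pow_succ] at hx
        simp only [← mul_assoc] at hx
        have h2 : x * (a * c) ^ n * a * σ c = 0 := (hσ _ _).mp hx
        have h3 : a * σ c * (x * (a * c) ^ n) = 0 :=
          hrev _ _ (by simp only [← mul_assoc]; exact h2)
        rw [← mul_assoc] at h3
        have h4 := ih _ h3
        rw [mul_assoc] at h4
        have h5 : x * (a * σ c) ^ n * (a * σ c) = 0 := hrev _ _ h4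
        rw [pow_succ, ← mul_assoc]
        exact h5
    refine ⟨k, ?_⟩
    have := main k 1 (by simpa using hk)
    simpa using this
  intro m
  induction m with
  | zero => simpa using h
  | succ n ih =>
    rw [Function.iterate_succ_apply']
    exact key _ ih
end

section
/- Let B be a ring, Σ a family of endomorphisms and Δ a family of Σ-derivations, and let I be a (Σ,Δ)-invariant, weak (Σ,Δ)-symmetric ideal of B with I ⊆ nil(B). Then B/I is weak (Σ̄,Δ̄)-symmetric (for the induced maps) if and only if B is weak (Σ,Δ)-symmetric. -/
lemma nilp_mk_iff {B : Type*} [Ring B] (I : TwoSidedIdeal B)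
    (hInil : ∀ x ∈ I, IsNilpotent x) (x : B) :
    IsNilpotent (I.ringCon.mk' x) ↔ IsNilpotent x := by
  constructor
  · rintro ⟨k, hk⟩
    have : I.ringCon.mk' (x ^ k) = I.ringCon.mk' 0 := by
      rw [map_pow, hk, map_zero]
    have hmem : x ^ k ∈ I := by
      rw [TwoSidedIdeal.mem_iff]
      exact I.ringCon.eq.mp this
    obtain ⟨m, hm⟩ := hInil _ hmem
    exact ⟨k * m, by rw [pow_mul, hm]⟩
  · exact fun h => h.map _

theorem quotient_weak_symmetric_iff (B : Type*) [Ring B] (n : ℕ)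
    (σ : Fin n → B →+* B) (δ : Fin n → B → B)
    (hadd : ∀ i (x y : B), δ i (x + y) = δ i x + δ i y)
    (hleib : ∀ i (x y : B), δ i (x * y) = σ i x * δ i y + δ i x * y)
    (I : TwoSidedIdeal B)
    (hσI : ∀ i, ∀ x ∈ I, σ i x ∈ I)
    (hδI : ∀ i, ∀ x ∈ I, δ i x ∈ I)
    (hIsym : ∀ a ∈ I, ∀ b ∈ I, ∀ c ∈ I, IsNilpotent (a * b * c) →
      ∀ i, IsNilpotent (a * c * σ i b) ∧ IsNilpotent (a * c * δ i b))
    (hInil : ∀ x ∈ I, IsNilpotent x)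
    (σbar : Fin n → I.ringCon.Quotient → I.ringCon.Quotient)
    (δbar : Fin n → I.ringCon.Quotient → I.ringCon.Quotient)
    (hσbar : ∀ i (x : B), σbar i (I.ringCon.mk' x) = I.ringCon.mk' (σ i x))
    (hδbar : ∀ i (x : B), δbar i (I.ringCon.mk' x) = I.ringCon.mk' (δ i x)) :
    (∀ a b c : I.ringCon.Quotient, IsNilpotent (a * b * c) →
        ∀ i, IsNilpotent (a * c * σbar i b) ∧ IsNilpotent (a * c * δbar i b)) ↔
      (∀ a b c : B, IsNilpotent (a * b * c) →
        ∀ i, IsNilpotent (a * c * σ i b) ∧ IsNilpotent (a * c * δ i b)) := by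
  constructor
  · intro hq a b c habc i
    have h : IsNilpotent (I.ringCon.mk' a * I.ringCon.mk' b * I.ringCon.mk' c) := by
      simp only [← map_mul]
      exact (nilp_mk_iff I hInil _).mpr habc
    obtain ⟨h1, h2⟩ := hq _ _ _ h i
    rw [hσbar] at h1
    simp only [← map_mul] at h1
    rw [nilp_mk_iff I hInil] at h1
    rw [hδbar] at h2
    simp only [← map_mul] at h2
    rw [nilp_mk_iff I hInil] at h2
    exact ⟨h1, h2⟩
  · intro hB a b c habc i
    obtain ⟨x, rfl⟩ := I.ringCon.mk'_surjective a
    obtain ⟨y, rfl⟩ := I.ringCon.mk'_surjective b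
    obtain ⟨z, rfl⟩ := I.ringCon.mk'_surjective c
    have habc' : IsNilpotent (x * y * z) :=
      (nilp_mk_iff I hInil _).mp (by simpa [map_mul] using habc)
    obtain ⟨h1, h2⟩ := hB x y z habc' i
    constructor
    · erw [hσbar i y]; simpa [map_mul] using (nilp_mk_iff I hInil _).mpr h1
    · erw [hδbar i y]; simpa [map_mul] using (nilp_mk_iff I hInil _).mpr h2
end
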